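/- For any non-empty finite full binary tree T which is not monotone, there exists a finite full binary tree T' obtained by repeatedly replacing a subtree by one of its immediate subtrees, such that T' is monotone and E_{T'} ≥ E_T. -/
import Mathlib


/-- Finite full rooted ordered binary trees with internal nodes labeled by `X`. -/
inductive BTree (X : Type) : Type
  | leaf : BTree X
  | node : X → BTree X → BTree X → BTree X

namespace BTree

variable {X : Type}

/-- The branches (root-to-leaf paths) of a tree, each recorded as the list of
edge labels (`false` = left/0, `true` = right/1) along the path. -/
def branches : BTree X → List (List Bool)
  | leaf => [[]]
  | node _ l r => (branches l).map (List.cons false) ++ (branches r).map (List.cons true)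

/-- The expected length of a uniformly random branch:
`E T = ∑_{b ∈ B(T)} |b| · 2^{-|b|}`. -/
noncomputable def E (t : BTree X) : ℝ :=
  ((branches t).map (fun b => (b.length : ℝ) * (2 : ℝ) ^ (-(b.length : ℤ)))).sum

/-- The internal-node positions of the tree, as paths from the root. -/
def nodePaths : BTree X → List (List Bool)
  | leaf => []
  | node _ l r =>
      [] :: ((nodePaths l).map (List.cons false) ++ (nodePaths r).map (List.cons true))

/-- `w` is a weight function for `t`: at every internal node, the two outgoing
edges get nonnegative weights summing to `1`. -/
def IsWeightFn (t : BTree X) (w : List Bool → Bool → ℝ) : Prop :=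
  ∀ p ∈ nodePaths t, 0 ≤ w p false ∧ 0 ≤ w p true ∧ w p false + w p true = 1

/-- The total weight of a branch `b`: the sum of the weights of its edges. -/
def branchWeight (w : List Bool → Bool → ℝ) (b : List Bool) : ℝ :=
  ((List.range b.length).map (fun i => w (b.take i) (b.getD i false))).sum

/-- The subtree of `t` rooted at the end of the path `p` (junk value `leaf`
if the path leaves the tree). -/
def subtreeAt : BTree X → List Bool → BTree X
  | t, [] => t
  | leaf, _ :: _ => leaf
  | node _ l r, d :: p => subtreeAt (if d then r else l) p

/-- A tree is quasi-balanced if some weight function gives all branches the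
same total weight `E T / 2`. -/
def QuasiBalanced (t : BTree X) : Prop :=
  ∃ w : List Bool → Bool → ℝ, IsWeightFn t w ∧ ∀ b ∈ branches t, branchWeight w b = E t / 2

/-- A tree is monotone if every subtree's expected branch length is at least
that of each of its immediate subtrees. -/
def IsMonotone : BTree X → Prop
  | leaf => True
  | node x l r =>
      E l ≤ E (node x l r) ∧ E r ≤ E (node x l r) ∧ IsMonotone l ∧ IsMonotone r

/-- The minimum length of a branch of the tree. -/
def minBranch : BTree X → ℕ
  | leaf => 0
  | node _ l r => 1 + min (minBranch l) (minBranch r)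

/-- The sequence of labeled examples along the path `p`: at a node labeled `x`,
following the edge labeled `d` produces the example `(x, d)`. -/
def examplesAlong : BTree X → List Bool → List (X × Bool)
  | leaf, _ => []
  | node _ _ _, [] => []
  | node x l r, d :: p => (x, d) :: examplesAlong (if d then r else l) p

end BTree

/-- One step of replacing a subtree by one of its immediate subtrees. -/
inductive BTree.Shrink {X : Type} : BTree X → BTree X → Prop
  | left (x : X) (l r : BTree X) : BTree.Shrink (BTree.node x l r) l
  | right (x : X) (l r : BTree X) : BTree.Shrink (BTree.node x l r) r
  | congrLeft (x : X) {l l' : BTree X} (r : BTree X) :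
      BTree.Shrink l l' → BTree.Shrink (BTree.node x l r) (BTree.node x l' r)
  | congrRight (x : X) (l : BTree X) {r r' : BTree X} :
      BTree.Shrink r r' → BTree.Shrink (BTree.node x l r) (BTree.node x l r')

namespace BTree

/-- Kraft sum of a tree. -/
noncomputable def W (t : BTree X) : ℝ :=
  ((branches t).map (fun b => (2 : ℝ) ^ (-(b.length : ℤ)))).sum

variable {X : Type}

lemma W_eq_one : ∀ t : BTree X, W t = 1
  | leaf => by simp [W, branches]
  | node x l r => by
    have hl := W_eq_one l
    have hr := W_eq_one r
    simp only [W, branches, List.map_append, List.sum_append, List.map_map] at *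
    have hfun : ∀ d : Bool,
        ((fun b : List Bool => (2:ℝ) ^ (-(b.length : ℤ))) ∘ List.cons d) =
        fun b : List Bool => (2:ℝ)⁻¹ * (2:ℝ) ^ (-(b.length : ℤ)) := by
      intro d; funext b
      simp only [Function.comp, List.length_cons]
      rw [show (-((b.length : ℕ) + 1 : ℕ) : ℤ) = -(b.length : ℤ) + (-1) by push_cast; ring,
        zpow_add₀ (by norm_num : (2:ℝ) ≠ 0)]
      ring
    rw [hfun, hfun, List.sum_map_mul_left, List.sum_map_mul_left, hl, hr]
    norm_num

lemma E_node (x : X) (l r : BTree X) :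
    E (node x l r) = 1 + (E l + E r) / 2 := by
  have hl := W_eq_one l
  have hr := W_eq_one r
  simp only [W] at hl hr
  simp only [E, branches, List.map_append, List.sum_append, List.map_map]
  have hfun : ∀ d : Bool,
      ((fun b : List Bool => (b.length : ℝ) * (2:ℝ) ^ (-(b.length : ℤ))) ∘ List.cons d) =
      fun b : List Bool => (2:ℝ)⁻¹ * ((b.length : ℝ) * (2:ℝ) ^ (-(b.length : ℤ)))
        + (2:ℝ)⁻¹ * ((2:ℝ) ^ (-(b.length : ℤ))) := by
    intro d; funext b
    simp only [Function.comp, List.length_cons]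
    rw [show (-((b.length : ℕ) + 1 : ℕ) : ℤ) = -(b.length : ℤ) + (-1) by push_cast; ring,
      zpow_add₀ (by norm_num : (2:ℝ) ≠ 0)]
    push_cast
    ring
  rw [hfun, hfun]
  rw [List.sum_map_add, List.sum_map_add, List.sum_map_mul_left, List.sum_map_mul_left,
    List.sum_map_mul_left, List.sum_map_mul_left, hl, hr]
  ring

lemma shrink_congrLeft {l l' : BTree X} (x : X) (r : BTree X)
    (h : Relation.ReflTransGen Shrink l l') :
    Relation.ReflTransGen Shrink (node x l r) (node x l' r) := by
  induction h with
  | refl => exact .refl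
  | tail _ hstep ih => exact ih.tail (Shrink.congrLeft x r hstep)

lemma shrink_congrRight {r r' : BTree X} (x : X) (l : BTree X)
    (h : Relation.ReflTransGen Shrink r r') :
    Relation.ReflTransGen Shrink (node x l r) (node x l r') := by
  induction h with
  | refl => exact .refl
  | tail _ hstep ih => exact ih.tail (Shrink.congrRight x l hstep)

lemma exists_monotone_shrink_aux : ∀ t : BTree X,
    ∃ t' : BTree X, Relation.ReflTransGen Shrink t t' ∧ IsMonotone t' ∧ E t ≤ E t'
  | leaf => ⟨leaf, .refl, trivial, le_refl _⟩
  | node x l r => by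
    obtain ⟨l', hl, hlm, hle⟩ := exists_monotone_shrink_aux l
    obtain ⟨r', hr, hrm, hre⟩ := exists_monotone_shrink_aux r
    have hreach : Relation.ReflTransGen Shrink (node x l r) (node x l' r') :=
      (shrink_congrLeft x r hl).trans (shrink_congrRight x l' hr)
    have hE : E (node x l r) ≤ E (node x l' r') := by
      rw [E_node, E_node]; linarith
    rcases le_or_gt (E l') (E (node x l' r')) with h1 | h1
    · rcases le_or_gt (E r') (E (node x l' r')) with h2 | h2
      · exact ⟨node x l' r', hreach, ⟨h1, h2, hlm, hrm⟩, hE⟩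
      · exact ⟨r', hreach.tail (Shrink.right x l' r'), hrm, le_of_lt (lt_of_le_of_lt hE h2)⟩
    · exact ⟨l', hreach.tail (Shrink.left x l' r'), hlm, le_of_lt (lt_of_le_of_lt hE h1)⟩

end BTree

/-- Any non-monotone tree can be turned, by repeatedly replacing a subtree by
one of its immediate subtrees, into a monotone tree with at least the same
expected branch length. -/
theorem exists_monotone_shrink {X : Type} (T : BTree X) (h : ¬ BTree.IsMonotone T) :
    ∃ T' : BTree X, Relation.ReflTransGen BTree.Shrink T T' ∧
      BTree.IsMonotone T' ∧ BTree.E T ≤ BTree.E T' := by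
  exact BTree.exists_monotone_shrink_aux T
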